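/- arXiv:1508.05507 — 2 statements merged into one kernel-verified Lean document; each statement's English description precedes it below -/
import Mathlib

section
/- Let m, n ≥ 1 be integers, v ∈ ℝⁿ, and A a real n × m matrix. Let M be the (m+n) × (m+1) real matrix written in block form as M = [[0_{m×1}, I_m], [v, A]], i.e. its first column is (0,…,0, v₁,…,v_n)ᵀ and for j = 1,…,m its (j+1)-th column is (e_j, A e_j) where e_j is the j-th standard basis vector of ℝ^m. Then det(Mᵀ M) ≤ ‖v‖² · (1 + ‖A‖_F²)^m, where ‖v‖ is the Euclidean norm and ‖A‖_F is the Frobenius norm of A. In particular, if ‖A‖_F ≤ 1 then √(det(Mᵀ M)) ≤ 2^{m/2} ‖v‖. -/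
open Matrix

/-!
With `w` the column `v`, `MᵀM = [[‖v‖², (Aᵀw)ᵀ], [Aᵀw, 1 + AᵀA]]`. Since `1 + AᵀA` is positive
definite, the Schur complement `‖v‖² - wᵀA (1 + AᵀA)⁻¹ Aᵀw` is at most `‖v‖²`, so
`det (MᵀM) ≤ ‖v‖² det (1 + AᵀA)`. Finally `det (1 + AᵀA) = ∏ (1 + λᵢ) ≤ (1 + ∑ λᵢ) ^ m` over the
eigenvalues `λᵢ ≥ 0` of `AᵀA`, and `∑ λᵢ = tr (AᵀA) = ‖A‖_F²`.
-/

theorem Matrix.IsHermitian.det_one_add_eq_prod {ι : Type*} [Fintype ι] [DecidableEq ι]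
    {B : Matrix ι ι ℝ} (hB : B.IsHermitian) : (1 + B).det = ∏ i, (1 + hB.eigenvalues i) := by
  have h : 1 + B = cfc (fun x : ℝ => 1 + x) B := by
    rw [cfc_add .., cfc_const_one .., cfc_id' ..]
  rw [h, hB.cfc_eq]
  simp [IsHermitian.cfc, -Unitary.conjStarAlgAut_apply]

theorem Matrix.PosSemidef.det_one_add_le {ι : Type*} [Fintype ι] [DecidableEq ι]
    {B : Matrix ι ι ℝ} (hB : B.PosSemidef) :
    (1 + B).det ≤ (1 + B.trace) ^ Fintype.card ι := by
  rw [hB.1.det_one_add_eq_prod, hB.1.trace_eq_sum_eigenvalues]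
  calc ∏ i, (1 + hB.1.eigenvalues i) ≤ ∏ _i : ι, (1 + ∑ j, hB.1.eigenvalues j) := by
        refine Finset.prod_le_prod (fun i _ => ?_) fun i _ => ?_
        · exact add_nonneg zero_le_one (hB.eigenvalues_nonneg i)
        · gcongr
          exact Finset.single_le_sum (fun j _ => hB.eigenvalues_nonneg j) (Finset.mem_univ i)
    _ = (1 + ∑ j, hB.1.eigenvalues j) ^ Fintype.card ι := by simp

theorem Matrix.trace_transpose_mul_self {m ι : Type*} [Fintype m] [Fintype ι]
    (A : Matrix m ι ℝ) : (Aᵀ * A).trace = ∑ i, ∑ j, A i j ^ 2 := by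
  simp [trace, mul_apply, sq, Finset.sum_comm (γ := m)]

theorem Matrix.det_fromBlocks_le_of_posDef {ι : Type*} [Fintype ι] [DecidableEq ι]
    (a : Matrix (Fin 1) (Fin 1) ℝ) (b : Matrix ι (Fin 1) ℝ) {D : Matrix ι ι ℝ} (hD : D.PosDef) :
    (fromBlocks a bᵀ b D).det ≤ D.det * a 0 0 := by
  have : Invertible D := hD.isUnit.invertible
  have hq : 0 ≤ (bᵀ * ⅟D * b) 0 0 := by
    simpa [invOf_eq_nonsing_inv] using (hD.inv.posSemidef.conjTranspose_mul_mul_same b).diag_nonneg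
  rw [det_fromBlocks₂₂, det_fin_one, sub_apply]
  exact mul_le_mul_of_nonneg_left (by linarith) hD.det_pos.le

theorem Matrix.transpose_mul_self_of_eq_fromBlocks_zero_one {l m n : Type*} [Fintype m]
    [Fintype n] [DecidableEq m] {w : Matrix n l ℝ} {A : Matrix n m ℝ}
    {M : Matrix (m ⊕ n) (l ⊕ m) ℝ} (hM : M = fromBlocks 0 1 w A) :
    Mᵀ * M = fromBlocks (wᵀ * w) (Aᵀ * w)ᵀ (Aᵀ * w) (1 + Aᵀ * A) := by
  rw [hM, fromBlocks_transpose, fromBlocks_multiply]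
  simp [transpose_mul]

theorem Real.sqrt_mul_pow {x b : ℝ} (hx : 0 ≤ x) (hb : 0 ≤ b) (m : ℕ) :
    √(x * b ^ m) = b ^ ((m : ℝ) / 2) * √x := by
  rw [Real.sqrt_mul hx, mul_comm, Real.sqrt_eq_rpow, ← Real.rpow_natCast, ← Real.rpow_mul hb]
  ring_nf

theorem statement_2_general (m n : ℕ) (v : Fin n → ℝ)
    (A : Matrix (Fin n) (Fin m) ℝ) :
    let M : Matrix (Fin m ⊕ Fin n) (Fin 1 ⊕ Fin m) ℝ :=
      Matrix.fromBlocks 0 1 (Matrix.of fun i _ => v i) A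
    (Mᵀ * M).det ≤ (∑ i, v i ^ 2) * (1 + ∑ i, ∑ j, A i j ^ 2) ^ m ∧
      (Real.sqrt (∑ i, ∑ j, A i j ^ 2) ≤ 1 →
        Real.sqrt ((Mᵀ * M).det) ≤ (2 : ℝ) ^ ((m : ℝ) / 2) * Real.sqrt (∑ i, v i ^ 2)) := by
  intro M
  have hB : (Aᵀ * A).PosSemidef := by simpa using posSemidef_conjTranspose_mul_self A
  have hD : (1 + Aᵀ * A).PosDef := .add_posSemidef .one hB
  have hdet : (Mᵀ * M).det ≤ (∑ i, v i ^ 2) * (1 + ∑ i, ∑ j, A i j ^ 2) ^ m := by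
    calc (Mᵀ * M).det ≤ (1 + Aᵀ * A).det * ∑ i, v i ^ 2 := by
          rw [transpose_mul_self_of_eq_fromBlocks_zero_one rfl]
          refine (det_fromBlocks_le_of_posDef _ _ hD).trans_eq ?_
          simp [mul_apply, sq]
      _ ≤ (1 + ∑ i, ∑ j, A i j ^ 2) ^ m * ∑ i, v i ^ 2 := by
          gcongr
          simpa [trace_transpose_mul_self] using hB.det_one_add_le
      _ = _ := mul_comm _ _
  refine ⟨hdet, fun hA => ?_⟩
  have hF : ∑ i, ∑ j, A i j ^ 2 ≤ 1 := Real.sqrt_le_one.mp hA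
  calc √(Mᵀ * M).det ≤ √((∑ i, v i ^ 2) * 2 ^ m) :=
        Real.sqrt_le_sqrt (hdet.trans (by gcongr; linarith))
    _ = _ := Real.sqrt_mul_pow (by positivity) zero_le_two m

/-- For the `(m+n) × (m+1)` block matrix `M = [[0, I_m], [v, A]]` one has
`det(MᵀM) ≤ ‖v‖² (1 + ‖A‖_F²)^m`; in particular, if `‖A‖_F ≤ 1` then
`√(det(MᵀM)) ≤ 2^{m/2} ‖v‖`. -/
theorem statement_2 (m n : ℕ) (hm : 1 ≤ m) (hn : 1 ≤ n) (v : Fin n → ℝ)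
    (A : Matrix (Fin n) (Fin m) ℝ) :
    let M : Matrix (Fin m ⊕ Fin n) (Fin 1 ⊕ Fin m) ℝ :=
      Matrix.fromBlocks 0 1 (Matrix.of fun i _ => v i) A
    (Mᵀ * M).det ≤ (∑ i, v i ^ 2) * (1 + ∑ i, ∑ j, A i j ^ 2) ^ m ∧
      (Real.sqrt (∑ i, ∑ j, A i j ^ 2) ≤ 1 →
        Real.sqrt ((Mᵀ * M).det) ≤ (2 : ℝ) ^ ((m : ℝ) / 2) * Real.sqrt (∑ i, v i ^ 2)) :=
  statement_2_general m n v A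
end

section
/- Let m, n ≥ 1 be integers, L > 0, and let F, G : ℝ^m → ℝⁿ be Lipschitz maps with Lipschitz constants at most L. Define H : ℝ × ℝ^m → ℝ^{m+n} by H(t,x) = (x, t F(x) + (1−t) G(x)). Then H is Lipschitz, hence differentiable almost everywhere, and there is a constant C depending only on m, n and L such that ∫_{(0,1) × B_s} √(det(DH(t,x)ᵀ ∘ DH(t,x))) dt dx ≤ C ∫_{B_s} ‖F(x) − G(x)‖ dx for every ball B_s ⊂ ℝ^m, where DH(t,x) : ℝ^{1+m} → ℝ^{m+n} denotes the Fréchet differential of H (defined for almost every (t,x)) and det(DHᵀ∘DH) its Gram determinant with respect to the standard bases. -/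
/-! The column of `DH` in the time direction is `(0, F x - G x)`, since `H` is affine in `t`,
while the `m` spatial columns are bounded by `max 1 L`. A Gram determinant `det (Mᵀ M)` is
quadratic in each column, so normalising the time column and bounding the entries of the
normalised Gram matrix by Cauchy–Schwarz gives `√(det (Mᵀ M)) ≤ C ‖F x - G x‖`; integrating
this pointwise bound over `(0,1) × B_s` gives the estimate. Both column bounds come from
Lipschitz bounds along lines, which also hold where `H` is not differentiable (there `DH = 0`). -/

open MeasureTheory Matrix

/-- The affine homotopy `H(t,x) = (x, t F(x) + (1−t) G(x))` between the graphs of `F`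
and `G`. -/
noncomputable def affineHomotopy (m n : ℕ)
    (F G : EuclideanSpace ℝ (Fin m) → EuclideanSpace ℝ (Fin n)) :
    ℝ × EuclideanSpace ℝ (Fin m) → EuclideanSpace ℝ (Fin m) × EuclideanSpace ℝ (Fin n) :=
  fun p => (p.2, p.1 • F p.2 + (1 - p.1) • G p.2)

/-- The Gram Jacobian `√(det(DH(t,x)ᵀ ∘ DH(t,x)))` of a map
`H : ℝ × ℝ^m → ℝ^m × ℝ^n`, computed from the matrix of the Fréchet differential
`DH(t,x)` with respect to the standard bases. -/
noncomputable def gramJacobian (m n : ℕ)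
    (H : ℝ × EuclideanSpace ℝ (Fin m) → EuclideanSpace ℝ (Fin m) × EuclideanSpace ℝ (Fin n))
    (p : ℝ × EuclideanSpace ℝ (Fin m)) : ℝ :=
  let D := fderiv ℝ H p
  let basis : Unit ⊕ Fin m → ℝ × EuclideanSpace ℝ (Fin m) :=
    Sum.elim (fun _ => ((1 : ℝ), 0)) (fun j => ((0 : ℝ), EuclideanSpace.single j 1))
  let M : Matrix (Fin m ⊕ Fin n) (Unit ⊕ Fin m) ℝ :=
    Matrix.of fun i j =>
      Sum.elim (fun i₁ => (D (basis j)).1 i₁) (fun i₂ => (D (basis j)).2 i₂) i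
  Real.sqrt ((Mᵀ * M).det)

open scoped NNReal

theorem norm_fderiv_apply_le_of_lipschitzWith_line {𝕜 E F : Type*} [NontriviallyNormedField 𝕜]
    [NormedAddCommGroup E] [NormedSpace 𝕜 E] [NormedAddCommGroup F] [NormedSpace 𝕜 F]
    {f : E → F} {p v : E} {K : ℝ≥0} (hf : LipschitzWith K fun s : 𝕜 => f (p + s • v)) :
    ‖fderiv 𝕜 f p v‖ ≤ K := by
  by_cases hd : DifferentiableAt 𝕜 f p
  · have hline : HasDerivAt (fun s : 𝕜 => f (p + s • v)) (fderiv 𝕜 f p v) 0 := by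
      have hv : HasDerivAt (fun s : 𝕜 => p + s • v) v 0 :=
        ((hasDerivAt_id (0 : 𝕜)).smul_const v).const_add p |>.congr_deriv (one_smul 𝕜 v)
      have hf' : HasFDerivAt f (fderiv 𝕜 f p) (p + (0 : 𝕜) • v) := by
        simpa using hd.hasFDerivAt
      exact hf'.comp_hasDerivAt 0 hv
    rw [← hline.deriv]
    exact norm_deriv_le_of_lipschitz hf
  · simp [fderiv_zero_of_not_differentiableAt hd]

theorem LipschitzWith.convex_combination {α E : Type*} [PseudoMetricSpace α]
    [SeminormedAddCommGroup E] [NormedSpace ℝ E] {K : ℝ≥0} {F G : α → E}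
    (hF : LipschitzWith K F) (hG : LipschitzWith K G) {t : ℝ} (ht : t ∈ Set.Icc (0 : ℝ) 1) :
    LipschitzWith K fun y => t • F y + (1 - t) • G y := by
  refine LipschitzWith.of_dist_le_mul fun y y' => ?_
  have h1t : 0 ≤ 1 - t := sub_nonneg.2 ht.2
  calc dist (t • F y + (1 - t) • G y) (t • F y' + (1 - t) • G y')
      ≤ t * dist (F y) (F y') + (1 - t) * dist (G y) (G y') := by
        refine (dist_add_add_le _ _ _ _).trans_eq ?_
        rw [dist_smul₀, dist_smul₀, Real.norm_of_nonneg ht.1, Real.norm_of_nonneg h1t]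
    _ ≤ t * (K * dist y y') + (1 - t) * (K * dist y y') := by
        gcongr
        · exact ht.1
        · exact hF.dist_le_mul y y'
        · exact hG.dist_le_mul y y'
    _ = K * dist y y' := by ring

theorem lipschitzWith_const_add_smul {E : Type*} [SeminormedAddCommGroup E] [NormedSpace ℝ E]
    (a v : E) : LipschitzWith ‖v‖₊ fun s : ℝ => a + s • v :=
  LipschitzWith.of_dist_le_mul fun s s' => by
    rw [dist_add_left, dist_eq_norm, dist_eq_norm, ← sub_smul, norm_smul, coe_nnnorm, mul_comm]

namespace Matrix

variable {ι κ : Type*} [Fintype ι]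

theorem abs_transpose_mul_self_apply_le (N : Matrix ι κ ℝ) {B : ℝ}
    (hN : ∀ j, ∑ i, N i j ^ 2 ≤ B) (j k : κ) : |(Nᵀ * N) j k| ≤ B := by
  have hB : 0 ≤ B := (Finset.sum_nonneg fun i _ => sq_nonneg (N i j)).trans (hN j)
  refine abs_le_of_sq_le_sq ?_ hB
  calc ((Nᵀ * N) j k) ^ 2 = (∑ i, N i j * N i k) ^ 2 := by simp [mul_apply]
    _ ≤ (∑ i, N i j ^ 2) * ∑ i, N i k ^ 2 := Finset.sum_mul_sq_le_sq_mul_sq _ _ _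
    _ ≤ B ^ 2 := by rw [sq]; gcongr <;> exact hN _

variable [Fintype κ] [DecidableEq κ]

theorem det_transpose_mul_self_le_of_sum_sq_le (N : Matrix ι κ ℝ) {B : ℝ}
    (hN : ∀ j, ∑ i, N i j ^ 2 ≤ B) :
    (Nᵀ * N).det ≤ (Fintype.card κ).factorial * B ^ Fintype.card κ := by
  simpa using (le_abs_self _).trans
    (det_le (abv := AbsoluteValue.abs) (abs_transpose_mul_self_apply_le N hN))

theorem det_transpose_mul_self_le (M : Matrix ι κ ℝ) (j₀ : κ) {B : ℝ} (hB : 0 < B)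
    (hM : ∀ j ≠ j₀, ∑ i, M i j ^ 2 ≤ B) :
    (Mᵀ * M).det ≤ (Fintype.card κ).factorial * B ^ (Fintype.card κ - 1) * ∑ i, M i j₀ ^ 2 := by
  set r : ℝ := ∑ i, M i j₀ ^ 2
  obtain hr | hr : 0 = r ∨ 0 < r := (Finset.sum_nonneg fun i _ => sq_nonneg (M i j₀)).eq_or_lt
  · have hcol : ∀ i, M i j₀ = 0 := fun i =>
      pow_eq_zero_iff two_ne_zero |>.1 <| (Finset.sum_eq_zero_iff_of_nonneg
        fun i _ => sq_nonneg (M i j₀)).1 hr.symm i (Finset.mem_univ i)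
    rw [← hr, mul_zero, det_eq_zero_of_column_eq_zero j₀ fun k => by simp [mul_apply, hcol]]
  -- rescale column `j₀` to squared norm `B`
  set c : ℝ := √(r / B)
  have hc : 0 < c := Real.sqrt_pos.2 (div_pos hr hB)
  set d : κ → ℝ := Function.update 1 j₀ c
  have hd : ∀ j, d j ≠ 0 := fun j => by
    by_cases hj : j = j₀ <;> simp [d, hj, hc.ne']
  set N : Matrix ι κ ℝ := M * diagonal d⁻¹
  have hMN : M = N * diagonal d := by
    rw [Matrix.mul_assoc, diagonal_mul_diagonal]
    simp [hd]
  have hN : ∀ j, ∑ i, N i j ^ 2 ≤ B := by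
    intro j
    by_cases hj : j = j₀
    · subst hj
      simp only [N, mul_diagonal, Pi.inv_apply, d, Function.update_self, mul_pow, ← Finset.sum_mul]
      rw [inv_pow, Real.sq_sqrt (div_pos hr hB).le, inv_div, mul_div, mul_div_cancel_left₀ _ hr.ne']
    · simpa [N, d, hj] using hM j hj
  have hdet : (Mᵀ * M).det = r / B * (Nᵀ * N).det := by
    have hprod : ∏ j, d j = c := by simp [d, Finset.prod_update_of_mem]
    rw [hMN, transpose_mul, diagonal_transpose, Matrix.mul_assoc, det_mul, ← Matrix.mul_assoc,
      det_mul, det_diagonal, hprod, ← Real.sq_sqrt (div_pos hr hB).le]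
    ring
  have hcard : Fintype.card κ = Fintype.card κ - 1 + 1 :=
    (Nat.sub_add_cancel (Fintype.card_pos_iff.2 ⟨j₀⟩)).symm
  calc (Mᵀ * M).det ≤ r / B * ((Fintype.card κ).factorial * B ^ Fintype.card κ) := by
        rw [hdet]; gcongr; exact det_transpose_mul_self_le_of_sum_sq_le N hN
    _ = _ := by
        rw [hcard, pow_succ, Nat.add_sub_cancel]; field_simp

end Matrix

local notation "ℝ^" k:max => EuclideanSpace ℝ (Fin k)

section AffineHomotopy

variable {m n : ℕ}

theorem locallyLipschitz_affineHomotopy {F G : ℝ^m → ℝ^n}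
    (hF : LocallyLipschitz F) (hG : LocallyLipschitz G) :
    LocallyLipschitz (affineHomotopy m n F G) := by
  have hΦ : ContDiff ℝ 1 fun q : (ℝ × ℝ^m) × (ℝ^n × ℝ^n) =>
      (q.1.2, q.1.1 • q.2.1 + (1 - q.1.1) • q.2.2) := by fun_prop
  have hΨ : LocallyLipschitz fun p : ℝ × ℝ^m => (p, F p.2, G p.2) :=
    LocallyLipschitz.id.prodMk <| (hF.comp LipschitzWith.prod_snd.locallyLipschitz).prodMk
      (hG.comp LipschitzWith.prod_snd.locallyLipschitz)
  exact (hΦ.locallyLipschitz.comp hΨ :)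

theorem affineHomotopy_add_smul_fst (F G : ℝ^m → ℝ^n) (p : ℝ × ℝ^m) (s : ℝ) :
    affineHomotopy m n F G (p + s • ((1 : ℝ), (0 : ℝ^m))) =
      affineHomotopy m n F G p + s • ((0 : ℝ^m), F p.2 - G p.2) := by
  refine Prod.ext ?_ ?_ <;>
    simp only [affineHomotopy, Prod.fst_add, Prod.snd_add, smul_zero, add_zero, Prod.smul_mk]
  module

theorem lipschitzWith_affineHomotopy_line_fst (F G : ℝ^m → ℝ^n) (p : ℝ × ℝ^m) :
    LipschitzWith ‖F p.2 - G p.2‖₊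
      fun s : ℝ => affineHomotopy m n F G (p + s • ((1 : ℝ), (0 : ℝ^m))) := by
  simp only [affineHomotopy_add_smul_fst]
  simpa [Prod.nnnorm_def] using
    lipschitzWith_const_add_smul (affineHomotopy m n F G p) ((0 : ℝ^m), F p.2 - G p.2)

theorem lipschitzWith_affineHomotopy_slice {K : ℝ≥0} {F G : ℝ^m → ℝ^n}
    (hF : LipschitzWith K F) (hG : LipschitzWith K G) {t : ℝ} (ht : t ∈ Set.Icc (0 : ℝ) 1) :
    LipschitzWith (max 1 K) fun y => affineHomotopy m n F G (t, y) :=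
  LipschitzWith.id.prodMk (hF.convex_combination hG ht)

noncomputable def stdBasisProd (m : ℕ) : Unit ⊕ Fin m → ℝ × ℝ^m :=
  Sum.elim (fun _ => ((1 : ℝ), 0)) fun j => ((0 : ℝ), EuclideanSpace.single j 1)

noncomputable def jacobianMatrix (D : ℝ × ℝ^m →L[ℝ] ℝ^m × ℝ^n) :
    Matrix (Fin m ⊕ Fin n) (Unit ⊕ Fin m) ℝ :=
  Matrix.of fun i j =>
    Sum.elim (fun i₁ => (D (stdBasisProd m j)).1 i₁) (fun i₂ => (D (stdBasisProd m j)).2 i₂) i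

theorem gramJacobian_eq (H : ℝ × ℝ^m → ℝ^m × ℝ^n) (p : ℝ × ℝ^m) :
    gramJacobian m n H p =
      √((jacobianMatrix (fderiv ℝ H p))ᵀ * jacobianMatrix (fderiv ℝ H p)).det :=
  rfl

theorem gramJacobian_nonneg (H : ℝ × ℝ^m → ℝ^m × ℝ^n) (p : ℝ × ℝ^m) :
    0 ≤ gramJacobian m n H p :=
  Real.sqrt_nonneg _

theorem sum_sq_jacobianMatrix (D : ℝ × ℝ^m →L[ℝ] ℝ^m × ℝ^n) (j : Unit ⊕ Fin m) :
    ∑ i, jacobianMatrix D i j ^ 2 =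
      ‖(D (stdBasisProd m j)).1‖ ^ 2 + ‖(D (stdBasisProd m j)).2‖ ^ 2 := by
  simp [jacobianMatrix, Fintype.sum_sum_type, EuclideanSpace.norm_sq_eq]

theorem sum_sq_jacobianMatrix_le (D : ℝ × ℝ^m →L[ℝ] ℝ^m × ℝ^n) (j : Unit ⊕ Fin m) :
    ∑ i, jacobianMatrix D i j ^ 2 ≤ 2 * ‖D (stdBasisProd m j)‖ ^ 2 := by
  rw [sum_sq_jacobianMatrix, two_mul]
  gcongr
  · exact norm_fst_le _
  · exact norm_snd_le _

theorem continuous_jacobianMatrix :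
    Continuous (jacobianMatrix : (ℝ × ℝ^m →L[ℝ] ℝ^m × ℝ^n) → _) := by
  refine continuous_matrix fun i j => ?_
  rcases i with i | i <;>
    simp only [jacobianMatrix, of_apply, Sum.elim_inl, Sum.elim_inr] <;> fun_prop

theorem measurable_gramJacobian (H : ℝ × ℝ^m → ℝ^m × ℝ^n) : Measurable (gramJacobian m n H) := by
  have hcont : Continuous fun D : ℝ × ℝ^m →L[ℝ] ℝ^m × ℝ^n =>
      √((jacobianMatrix D)ᵀ * jacobianMatrix D).det := by
    have := continuous_jacobianMatrix (m := m) (n := n)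
    fun_prop
  exact hcont.measurable.comp (measurable_fderiv ℝ H)

theorem gramJacobian_affineHomotopy_le {K : ℝ≥0} {F G : ℝ^m → ℝ^n}
    (hF : LipschitzWith K F) (hG : LipschitzWith K G) {t : ℝ} (ht : t ∈ Set.Icc (0 : ℝ) 1)
    (x : ℝ^m) :
    gramJacobian m n (affineHomotopy m n F G) (t, x) ≤
      √(2 * (m + 1).factorial * (2 * max 1 (K : ℝ) ^ 2) ^ m) * ‖F x - G x‖ := by
  set D := fderiv ℝ (affineHomotopy m n F G) (t, x)
  have htime : ∑ i, jacobianMatrix D i (.inl ()) ^ 2 ≤ 2 * ‖F x - G x‖ ^ 2 := by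
    refine (sum_sq_jacobianMatrix_le D _).trans ?_
    gcongr
    exact norm_fderiv_apply_le_of_lipschitzWith_line
      (lipschitzWith_affineHomotopy_line_fst F G (t, x))
  have hspace : ∀ j ≠ .inl (), ∑ i, jacobianMatrix D i j ^ 2 ≤ 2 * max 1 (K : ℝ) ^ 2 := by
    rintro (⟨⟩ | j) hj
    · exact absurd rfl hj
    refine (sum_sq_jacobianMatrix_le D _).trans ?_
    have hline : LipschitzWith (max 1 K * ‖EuclideanSpace.single j (1 : ℝ)‖₊) fun s : ℝ =>
        affineHomotopy m n F G ((t, x) + s • stdBasisProd m (.inr j)) := by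
      simpa [stdBasisProd, Function.comp_def] using
        (lipschitzWith_affineHomotopy_slice hF hG ht).comp
          (lipschitzWith_const_add_smul x (EuclideanSpace.single j 1))
    gcongr
    simpa using norm_fderiv_apply_le_of_lipschitzWith_line hline
  have hdet := det_transpose_mul_self_le (jacobianMatrix D) (.inl ()) (by positivity) hspace
  rw [Fintype.card_sum, Fintype.card_unit, Fintype.card_fin, Nat.add_sub_cancel_left,
    add_comm 1 m] at hdet
  calc gramJacobian m n (affineHomotopy m n F G) (t, x)
      ≤ √((m + 1).factorial * (2 * max 1 (K : ℝ) ^ 2) ^ m * (2 * ‖F x - G x‖ ^ 2)) := by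
        rw [gramJacobian_eq]
        gcongr
        exact hdet.trans (by gcongr)
    _ = _ := by
        rw [← mul_assoc, mul_comm _ (2 : ℝ), ← mul_assoc, Real.sqrt_mul (by positivity),
          Real.sqrt_sq (norm_nonneg _)]

theorem setIntegral_gramJacobian_affineHomotopy_le {K : ℝ≥0} {F G : ℝ^m → ℝ^n}
    (hF : LipschitzWith K F) (hG : LipschitzWith K G) (x₀ : ℝ^m) (s : ℝ) :
    ∫ p in Set.Ioo (0 : ℝ) 1 ×ˢ Metric.ball x₀ s, gramJacobian m n (affineHomotopy m n F G) p ≤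
      √(2 * (m + 1).factorial * (2 * max 1 (K : ℝ) ^ 2) ^ m) *
        ∫ x in Metric.ball x₀ s, ‖F x - G x‖ := by
  set C := √(2 * (m + 1).factorial * (2 * max 1 (K : ℝ) ^ 2) ^ m)
  set S := Set.Ioo (0 : ℝ) 1 ×ˢ Metric.ball x₀ s
  have hS : MeasurableSet S := measurableSet_Ioo.prod measurableSet_ball
  have hbound : ∀ p ∈ S, gramJacobian m n (affineHomotopy m n F G) p ≤ C * ‖F p.2 - G p.2‖ :=
    fun p hp => gramJacobian_affineHomotopy_le hF hG (Set.Ioo_subset_Icc_self hp.1) p.2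
  have hg : IntegrableOn (fun p : ℝ × ℝ^m => C * ‖F p.2 - G p.2‖) S :=
    (by have := hF.continuous; have := hG.continuous; fun_prop :
      Continuous fun p : ℝ × ℝ^m => C * ‖F p.2 - G p.2‖).continuousOn
      |>.integrableOn_compact (isCompact_Icc.prod (isCompact_closedBall x₀ s))
      |>.mono_set (Set.prod_mono Set.Ioo_subset_Icc_self Metric.ball_subset_closedBall)
  have hJ : IntegrableOn (gramJacobian m n (affineHomotopy m n F G)) S :=
    hg.mono' (measurable_gramJacobian _).aestronglyMeasurable <|
      ae_restrict_of_forall_mem hS fun p hp => by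
        rw [Real.norm_of_nonneg (gramJacobian_nonneg _ p)]
        exact hbound p hp
  calc ∫ p in S, gramJacobian m n (affineHomotopy m n F G) p
      ≤ ∫ p in S, C * ‖F p.2 - G p.2‖ := setIntegral_mono_on hJ hg hS hbound
    _ = C * ∫ x in Metric.ball x₀ s, ‖F x - G x‖ := by
        rw [Measure.volume_eq_prod]
        simpa using setIntegral_prod_mul (μ := volume) (ν := volume) (fun _ : ℝ => C)
          (fun x => ‖F x - G x‖) (Set.Ioo 0 1) (Metric.ball x₀ s)

end AffineHomotopy

theorem statement_3_general (m n : ℕ) (L : NNReal) :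
    (∀ (F G : EuclideanSpace ℝ (Fin m) → EuclideanSpace ℝ (Fin n)),
      LipschitzWith L F → LipschitzWith L G → LocallyLipschitz (affineHomotopy m n F G)) ∧
    ∃ C : ℝ, 0 < C ∧
      ∀ (F G : EuclideanSpace ℝ (Fin m) → EuclideanSpace ℝ (Fin n)),
        LipschitzWith L F → LipschitzWith L G →
        ∀ (x₀ : EuclideanSpace ℝ (Fin m)) (s : ℝ), 0 < s →
          ∫ p in Set.Ioo (0 : ℝ) 1 ×ˢ Metric.ball x₀ s,
              gramJacobian m n (affineHomotopy m n F G) p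
            ≤ C * ∫ x in Metric.ball x₀ s, ‖F x - G x‖ :=
  ⟨fun _ _ hF hG => locallyLipschitz_affineHomotopy hF.locallyLipschitz hG.locallyLipschitz,
    _, by positivity, fun _ _ hF hG x₀ s _ => setIntegral_gramJacobian_affineHomotopy_le hF hG x₀ s⟩

/-- For Lipschitz maps `F, G : ℝ^m → ℝ^n` with Lipschitz constant at most
`L`, the homotopy `H(t,x) = (x, t F(x) + (1−t) G(x))` is Lipschitz (hence differentiable
a.e.), and there is `C = C(m,n,L) > 0` with
`∫_{(0,1)×B_s} √(det(DHᵀ∘DH)) ≤ C ∫_{B_s} ‖F − G‖` for every ball `B_s ⊂ ℝ^m`. -/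
theorem statement_3 (m n : ℕ) (hm : 1 ≤ m) (hn : 1 ≤ n) (L : NNReal) (hL : 0 < L) :
    (∀ (F G : EuclideanSpace ℝ (Fin m) → EuclideanSpace ℝ (Fin n)),
      LipschitzWith L F → LipschitzWith L G → LocallyLipschitz (affineHomotopy m n F G)) ∧
    ∃ C : ℝ, 0 < C ∧
      ∀ (F G : EuclideanSpace ℝ (Fin m) → EuclideanSpace ℝ (Fin n)),
        LipschitzWith L F → LipschitzWith L G →
        ∀ (x₀ : EuclideanSpace ℝ (Fin m)) (s : ℝ), 0 < s →
          ∫ p in Set.Ioo (0 : ℝ) 1 ×ˢ Metric.ball x₀ s,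
              gramJacobian m n (affineHomotopy m n F G) p
            ≤ C * ∫ x in Metric.ball x₀ s, ‖F x - G x‖ :=
  statement_3_general m n L
end
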